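/- arXiv:math/0206296 — 4 statements merged into one kernel-verified Lean document; each statement's English description precedes it below -/
import Mathlib

section
/- Let (A,B) be an ordered partition of [n] with |A| = r, let σ be the cyclic permutation (1 2 ... n), and let x(A,B) = |{(a,b) ∈ A × B : a < b}|. Then x(σ(A), σ(B)) ≡ x(A,B) − r (mod n). Specifically, if n ∈ B then x(σ(A),σ(B)) = x(A,B) − r, and if n ∈ A then x(σ(A),σ(B)) = x(A,B) + (n − r). -/
/-!
Away from the top element `n` (which is `Fin.last m` when `n = m + 1`), `σ` is order preserving,
so only the pairs involving `n` change. If `n ∈ B`, it lies above every element of `A`, while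
`σ n = 1` lies below everything: the `r` pairs `(a, n)` are lost. If `n ∈ A`, it lies below
nothing, while `σ n = 1` lies below every element of `σ B`: `|B| = n - r` pairs are gained.
-/

open Finset

noncomputable def xAB {n : ℕ} (A B : Finset (Fin n)) : ℕ :=
  Set.ncard {p : Fin n × Fin n | p.1 ∈ A ∧ p.2 ∈ B ∧ p.1 < p.2}

def cyc {n : ℕ} [NeZero n] : Fin n → Fin n := fun i => i + 1

lemma xAB_eq_sum_card_filter {n : ℕ} (A B : Finset (Fin n)) :
    xAB A B = ∑ a ∈ A, #{b ∈ B | a < b} := by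
  have hset : {p : Fin n × Fin n | p.1 ∈ A ∧ p.2 ∈ B ∧ p.1 < p.2}
      = ↑{p ∈ A ×ˢ B | p.1 < p.2} := by
    ext p
    simp [and_assoc]
  rw [xAB, hset, Set.ncard_coe_finset, card_filter, sum_product]
  simp only [card_filter]

section

variable {n : ℕ} {A B : Finset (Fin n)} {c : Fin n}

lemma xAB_insert_left (hc : c ∉ A) :
    xAB (insert c A) B = xAB A B + #{b ∈ B | c < b} := by
  rw [xAB_eq_sum_card_filter, xAB_eq_sum_card_filter, sum_insert hc, add_comm]

lemma xAB_insert_right (hc : c ∉ B) :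
    xAB A (insert c B) = xAB A B + #{a ∈ A | a < c} := by
  have hterm : ∀ a, #{b ∈ insert c B | a < b} = #{b ∈ B | a < b} + if a < c then 1 else 0 := by
    intro a
    rw [filter_insert]
    split_ifs
    · exact card_insert_of_notMem (fun h => hc (mem_filter.1 h).1)
    · rfl
  simp only [xAB_eq_sum_card_filter, hterm, sum_add_distrib, sum_boole, Nat.cast_id]

lemma xAB_image_of_strictMonoOn {m : ℕ} {f : Fin n → Fin m} (hf : StrictMonoOn f ↑(A ∪ B)) :
    xAB (A.image f) (B.image f) = xAB A B := by
  have hA : Set.InjOn f ↑A := hf.injOn.mono (by simp)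
  have hB : Set.InjOn f ↑B := hf.injOn.mono (by simp)
  rw [xAB_eq_sum_card_filter, xAB_eq_sum_card_filter, sum_image hA]
  refine sum_congr rfl fun a ha => ?_
  rw [filter_image, card_image_of_injOn (hB.mono (coe_subset.2 (filter_subset _ _)))]
  congr 1
  refine filter_congr fun b hb => hf.lt_iff_lt ?_ ?_ <;> simp [ha, hb]

end

section

variable {m : ℕ}

lemma strictMonoOn_cyc : StrictMonoOn (cyc (n := m + 1)) {i | i ≠ Fin.last m} := by
  intro a ha b hb hab
  simp only [cyc, Fin.lt_def, Fin.val_add_one_of_lt (Fin.lt_last_iff_ne_last.2 ha),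
    Fin.val_add_one_of_lt (Fin.lt_last_iff_ne_last.2 hb)]
  exact Nat.add_lt_add_right hab 1

lemma cyc_injective : Function.Injective (cyc (n := m + 1)) := add_left_injective 1

lemma cyc_last : cyc (Fin.last m) = 0 := Fin.last_add_one m

lemma cyc_pos {i : Fin (m + 1)} (hi : i ≠ Fin.last m) : 0 < cyc i := by
  rw [Fin.pos_iff_ne_zero, ← cyc_last]
  exact fun h => hi (cyc_injective h)

variable {A B : Finset (Fin (m + 1))}

lemma xAB_image_cyc_of_last_notMem (hA : Fin.last m ∉ A) (hB : Fin.last m ∉ B) :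
    xAB (A.image cyc) (B.image cyc) = xAB A B :=
  xAB_image_of_strictMonoOn (strictMonoOn_cyc.mono fun i hi => by
    rcases mem_union.1 hi with h | h <;> rintro rfl <;> contradiction)

lemma xAB_image_cyc_of_last_mem_right (hA : Fin.last m ∉ A) (hB : Fin.last m ∈ B) :
    xAB (A.image cyc) (B.image cyc) + #A = xAB A B := by
  set B' := B.erase (Fin.last m)
  have hB' : Fin.last m ∉ B' := notMem_erase _ _
  have hsplit : B = insert (Fin.last m) B' := (insert_erase hB).symm
  have hshift : B.image cyc = insert 0 (B'.image cyc) := by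
    rw [hsplit, image_insert, cyc_last]
  have hzero : (0 : Fin (m + 1)) ∉ B'.image cyc := by
    simp only [mem_image, not_exists, not_and]
    exact fun b hb => (cyc_pos (ne_of_mem_erase hb)).ne'
  have hbelow_zero : #{a ∈ A.image cyc | a < 0} = 0 := by simp
  have hbelow_last : #{a ∈ A | a < Fin.last m} = #A := by
    rw [filter_true_of_mem fun a ha => Fin.lt_last_iff_ne_last.2 (ne_of_mem_of_not_mem ha hA)]
  rw [hshift, xAB_insert_right hzero, hbelow_zero, add_zero,
    xAB_image_cyc_of_last_notMem hA hB', hsplit, xAB_insert_right hB', hbelow_last]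

lemma xAB_image_cyc_of_last_mem_left (hA : Fin.last m ∈ A) (hB : Fin.last m ∉ B) :
    xAB (A.image cyc) (B.image cyc) = xAB A B + #B := by
  set A' := A.erase (Fin.last m)
  have hA' : Fin.last m ∉ A' := notMem_erase _ _
  have hsplit : A = insert (Fin.last m) A' := (insert_erase hA).symm
  have hshift : A.image cyc = insert 0 (A'.image cyc) := by
    rw [hsplit, image_insert, cyc_last]
  have hzero : (0 : Fin (m + 1)) ∉ A'.image cyc := by
    simp only [mem_image, not_exists, not_and]
    exact fun a ha => (cyc_pos (ne_of_mem_erase ha)).ne'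
  have habove_zero : #{b ∈ B.image cyc | 0 < b} = #B := by
    rw [filter_true_of_mem, card_image_of_injective _ cyc_injective]
    simp only [mem_image]
    rintro _ ⟨b, hb, rfl⟩
    exact cyc_pos (ne_of_mem_of_not_mem hb hB)
  have habove_last : #{b ∈ B | Fin.last m < b} = 0 := by
    simp [not_lt.2 (Fin.le_last _)]
  rw [hshift, xAB_insert_left hzero, habove_zero, xAB_image_cyc_of_last_notMem hA' hB,
    hsplit, xAB_insert_left hA', habove_last, add_zero]

end

/-- Let `(A, B)` be an ordered partition of `[n]` with `|A| = r` and `σ` the cyclic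
permutation `(1 2 ⋯ n)`.  Then `x(σA, σB) ≡ x(A,B) - r (mod n)`; specifically, if the
top element `n` lies in `B` then `x(σA, σB) = x(A,B) - r`, and if it lies in `A` then
`x(σA, σB) = x(A,B) + (n - r)`.  (Here `-1 : Fin n` is the top element `n` of `[n]`.) -/
theorem x_cyclic_shift (n : ℕ) [NeZero n] (A B : Finset (Fin n))
    (hdisj : Disjoint A B) (hunion : A ∪ B = univ) (r : ℕ) (hr : A.card = r) :
    ((xAB (A.image cyc) (B.image cyc) : ZMod n) = (xAB A B : ZMod n) - (r : ZMod n)) ∧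
    ((-1 : Fin n) ∈ B → xAB (A.image cyc) (B.image cyc) + r = xAB A B) ∧
    ((-1 : Fin n) ∈ A → xAB (A.image cyc) (B.image cyc) = xAB A B + (n - r)) := by
  obtain ⟨m, rfl⟩ := Nat.exists_eq_add_one_of_ne_zero (NeZero.ne n)
  subst hr
  have htop : (-1 : Fin (m + 1)) = Fin.last m :=
    (eq_neg_of_add_eq_zero_left (Fin.last_add_one m)).symm
  have hcard : #A + #B = m + 1 := by
    rw [← card_union_of_disjoint hdisj, hunion, card_univ, Fintype.card_fin]
  have hcard_zmod : (#A + #B : ZMod (m + 1)) = 0 := by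
    exact_mod_cast (congrArg (Nat.cast : ℕ → ZMod (m + 1)) hcard).trans (ZMod.natCast_self _)
  rw [htop]
  rcases mem_union.1 (hunion ▸ mem_univ (Fin.last m)) with hA | hB
  · have hB := disjoint_left.1 hdisj hA
    have hshift := xAB_image_cyc_of_last_mem_left hA hB
    refine ⟨?_, fun h => absurd h hB, fun _ => by omega⟩
    rw [hshift]
    push_cast
    linear_combination hcard_zmod
  · have hA := disjoint_right.1 hdisj hB
    have hshift := xAB_image_cyc_of_last_mem_right hA hB
    refine ⟨?_, fun _ => hshift, fun h => absurd h hA⟩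
    rw [← hshift]
    push_cast
    ring
end

section
/- For any set partition P of [mn] that belongs to 𝒫_n^0[mn] (every block is a union of the consecutive intervals J_k = {kn+1,...,(k+1)n}), the reduced crossing number satisfies c_0(P) ≡ 0 (mod n). -/
/-!
Fix `a₁ < b₁ < a₂`. If some `b₂` completes a reduced crossing, with blocks `A ∋ a₁, a₂` and
`B ∋ b₁, b₂`, then the admissible `b₂` are exactly the elements of `B` beyond `a₂`. Since `A`
contains the whole interval of `a₂` and is disjoint from `B`, these are the elements of `B` in
intervals `J_k` later than that of `a₂`: a union of intervals of length `n`. So every fibre of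
`(a₁, b₁, a₂, b₂) ↦ (a₁, b₁, a₂)` has size divisible by `n`.
-/

open Finset

/-- The reduced crossing number of a set partition of `Fin N`. -/
noncomputable def c0 {N : ℕ} (P : Finpartition (univ : Finset (Fin N))) : ℕ :=
  Set.ncard {t : Fin N × Fin N × Fin N × Fin N |
    t.1 < t.2.1 ∧ t.2.1 < t.2.2.1 ∧ t.2.2.1 < t.2.2.2 ∧
    ∃ A ∈ P.parts, ∃ B ∈ P.parts, A ≠ B ∧
      t.1 ∈ A ∧ t.2.2.1 ∈ A ∧ t.2.1 ∈ B ∧ t.2.2.2 ∈ B ∧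
      (∀ x ∈ A, t.1 ≤ x) ∧ (∀ x ∈ B, t.2.1 ≤ x)}

/-- The interval `J_k = {kn+1, …, (k+1)n}` inside `[mn]`, realized in `Fin (m*n)`. -/
def Jset (m n k : ℕ) : Finset (Fin (m * n)) := univ.filter fun x => x.val / n = k

lemma Nat.lt_iff_div_lt_div_of_div_ne {a b n : ℕ} (h : a / n ≠ b / n) :
    a < b ↔ a / n < b / n :=
  ⟨fun hab => (Nat.div_le_div_right hab.le).lt_of_ne h, Nat.lt_of_div_lt_div⟩

lemma Set.dvd_ncard_of_dvd_ncard_fibers {α β : Type*} [Fintype α] [Fintype β] {n : ℕ}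
    (p : α × β → Prop) (h : ∀ a, n ∣ {b | p (a, b)}.ncard) : n ∣ {x | p x}.ncard := by
  classical
  rw [Set.ncard_eq_toFinset_card', Set.toFinset_ofPred, card_filter, Fintype.sum_prod_type]
  refine dvd_sum fun a _ => ?_
  simpa [← card_filter, Set.ncard_eq_toFinset_card'] using h a

section Intervals

variable {m n k : ℕ}

@[simp]
lemma mem_Jset {x : Fin (m * n)} : x ∈ Jset m n k ↔ x.val / n = k := by
  simp [Jset]

lemma Fin.val_div_lt (x : Fin (m * n)) : x.val / n < m :=
  Nat.div_lt_of_lt_mul (Nat.mul_comm m n ▸ x.isLt)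

lemma card_Jset (hk : k < m) : #(Jset m n k) = n := by
  rcases n.eq_zero_or_pos with rfl | hn
  · exact card_eq_zero.mpr (eq_empty_of_forall_notMem fun x => absurd x.isLt (by simp))
  have hmap : (Jset m n k).map Fin.valEmbedding = Ico (k * n) (k * n + n) := by
    ext x
    simp only [mem_map, mem_Jset, Fin.valEmbedding_apply, mem_Ico, Nat.div_eq_iff hn]
    constructor
    · rintro ⟨a, ⟨hlo, hhi⟩, rfl⟩
      omega
    · rintro ⟨hlo, hhi⟩
      have hx : x < m * n :=
        hhi.trans_le (by simpa [Nat.succ_mul] using Nat.mul_le_mul_right n hk)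
      exact ⟨⟨x, hx⟩, ⟨hlo, Nat.le_sub_one_of_lt hhi⟩, rfl⟩
  rw [← card_map, hmap, Nat.card_Ico, Nat.add_sub_cancel_left]

def IsIntervalUnion (m n : ℕ) (S : Finset (Fin (m * n))) : Prop :=
  ∀ k < m, Jset m n k ⊆ S ∨ Disjoint (Jset m n k) S

namespace IsIntervalUnion

variable {S : Finset (Fin (m * n))}

lemma Jset_subset (hS : IsIntervalUnion m n S) {x : Fin (m * n)} (hx : x ∈ S) :
    Jset m n (x.val / n) ⊆ S :=
  (hS _ x.val_div_lt).resolve_right fun h => disjoint_left.mp h (mem_Jset.mpr rfl) hx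

lemma filter_div (hS : IsIntervalUnion m n S) (p : ℕ → Prop) [DecidablePred p] :
    IsIntervalUnion m n (S.filter fun x => p (x.val / n)) := by
  intro k hk
  by_cases hp : p k
  · refine (hS k hk).imp (fun hsub x hx => ?_) (Disjoint.mono_right (filter_subset _ _))
    exact mem_filter.mpr ⟨hsub hx, mem_Jset.mp hx ▸ hp⟩
  · exact Or.inr <| disjoint_left.mpr fun x hx hxS => hp (mem_Jset.mp hx ▸ (mem_filter.mp hxS).2)

lemma dvd_card (hS : IsIntervalUnion m n S) : n ∣ #S := by
  classical
  rw [card_eq_sum_card_fiberwise (f := fun x : Fin (m * n) => x.val / n) (t := range m)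
    fun x _ => mem_range.mpr x.val_div_lt]
  refine dvd_sum fun k hk => ?_
  have hfiber : S.filter (fun x => x.val / n = k) = Jset m n k ∩ S := by
    ext x
    simp [and_comm]
  rw [hfiber]
  rcases hS k (mem_range.mp hk) with hsub | hdisj
  · rw [inter_eq_left.mpr hsub, card_Jset (mem_range.mp hk)]
  · rw [disjoint_iff_inter_eq_empty.mp hdisj, card_empty]
    exact dvd_zero n

lemma filter_lt_eq_filter_div_lt {A B : Finset (Fin (m * n))} (hA : IsIntervalUnion m n A)
    (hAB : Disjoint A B) {a : Fin (m * n)} (ha : a ∈ A) :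
    B.filter (a < ·) = B.filter fun b => a.val / n < b.val / n := by
  refine filter_congr fun b hb => Nat.lt_iff_div_lt_div_of_div_ne fun hdiv => ?_
  exact disjoint_left.mp hAB (hA.Jset_subset ha (mem_Jset.mpr hdiv.symm)) hb

end IsIntervalUnion

end Intervals

section Crossings

variable {N : ℕ} (P : Finpartition (univ : Finset (Fin N)))

def IsReducedCrossing (a₁ b₁ a₂ b₂ : Fin N) : Prop :=
  a₁ < b₁ ∧ b₁ < a₂ ∧ a₂ < b₂ ∧
    ∃ A ∈ P.parts, ∃ B ∈ P.parts, A ≠ B ∧ a₁ ∈ A ∧ a₂ ∈ A ∧ b₁ ∈ B ∧ b₂ ∈ B ∧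
      (∀ x ∈ A, a₁ ≤ x) ∧ (∀ x ∈ B, b₁ ≤ x)

lemma c0_eq_ncard_isReducedCrossing :
    c0 P = {t : Fin N × Fin N × Fin N × Fin N |
      IsReducedCrossing P t.1 t.2.1 t.2.2.1 t.2.2.2}.ncard :=
  rfl

variable {P}

lemma IsReducedCrossing.exists_blocks {a₁ b₁ a₂ b₂ : Fin N}
    (hc : IsReducedCrossing P a₁ b₁ a₂ b₂) :
    ∃ A ∈ P.parts, ∃ B ∈ P.parts, A ≠ B ∧ a₂ ∈ A ∧
      {b | IsReducedCrossing P a₁ b₁ a₂ b} = ↑(B.filter (a₂ < ·)) := by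
  obtain ⟨h₁, h₂, -, A, hA, B, hB, hAB, ha₁, ha₂, hb₁, -, hminA, hminB⟩ := hc
  refine ⟨A, hA, B, hB, hAB, ha₂, Set.ext fun b => ⟨?_, ?_⟩⟩
  · rintro ⟨-, -, hlt, -, -, B', hB', -, -, -, hb₁', hb, -⟩
    exact mem_filter.mpr ⟨P.eq_of_mem_parts hB' hB hb₁' hb₁ ▸ hb, hlt⟩
  · intro hb
    obtain ⟨hbB, hlt⟩ := mem_filter.mp hb
    exact ⟨h₁, h₂, hlt, A, hA, B, hB, hAB, ha₁, ha₂, hb₁, hbB, hminA, hminB⟩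

end Crossings

lemma dvd_ncard_isReducedCrossing {m n : ℕ} {P : Finpartition (univ : Finset (Fin (m * n)))}
    (hP : ∀ A ∈ P.parts, IsIntervalUnion m n A) (a₁ b₁ a₂ : Fin (m * n)) :
    n ∣ {b | IsReducedCrossing P a₁ b₁ a₂ b}.ncard := by
  classical
  by_cases hc : ∃ b₂, IsReducedCrossing P a₁ b₁ a₂ b₂
  · obtain ⟨b₂, hc⟩ := hc
    obtain ⟨A, hA, B, hB, hAB, ha₂, hfiber⟩ := hc.exists_blocks
    have hdisj : Disjoint A B := P.disjoint hA hB hAB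
    rw [hfiber, Set.ncard_coe_finset, (hP A hA).filter_lt_eq_filter_div_lt hdisj ha₂]
    exact ((hP B hB).filter_div _).dvd_card
  · simp [not_exists.mp hc]

/-- If `P ∈ 𝒫_n⁰[mn]`, i.e. every block of `P` is a union of the consecutive intervals
`J_k`, then `c₀(P) ≡ 0 (mod n)`. -/
theorem n_dvd_c0_of_interval_partition (m n : ℕ)
    (P : Finpartition (univ : Finset (Fin (m * n))))
    (h : ∀ k < m, ∀ A ∈ P.parts, Jset m n k ⊆ A ∨ Disjoint (Jset m n k) A) :
    n ∣ c0 P := by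
  have hP : ∀ A ∈ P.parts, IsIntervalUnion m n A := fun A hA k hk => h k hk A hA
  rw [c0_eq_ncard_isReducedCrossing]
  exact Set.dvd_ncard_of_dvd_ncard_fibers _ fun a₁ => Set.dvd_ncard_of_dvd_ncard_fibers _
    fun b₁ => Set.dvd_ncard_of_dvd_ncard_fibers _ fun a₂ =>
      dvd_ncard_isReducedCrossing hP a₁ b₁ a₂
end

section
/- Let a and b be elements of a unital complex algebra satisfying ba = q'ab where q' is a primitive n'-th root of unity with n' > 1. Then (a + b)^{n'} = a^{n'} + b^{n'}. -/
/-!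
Expanding `(a + b) ^ n` with `b * a = q • (a * b)` gives the Gaussian binomial coefficients
`[n choose i]_q` as coefficients of the ordered monomials `a ^ i * b ^ (n - i)`. These satisfy
`[i]_q! [j]_q! [i + j choose i]_q = [i + j]_q!`, and for a primitive `n`-th root of unity the
`q`-integer `[n]_q = 1 + q + ⋯ + q ^ (n - 1)` vanishes while `[k]_q` does not for `0 < k < n`.
Over a domain this kills every mixed coefficient, leaving `a ^ n + b ^ n`.
-/

open Finset

theorem geom_sum_add {R : Type*} [Semiring R] (q : R) (m n : ℕ) :
    ∑ i ∈ range (m + n), q ^ i = ∑ i ∈ range m, q ^ i + q ^ m * ∑ i ∈ range n, q ^ i := by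
  simp only [sum_range_add, pow_add, mul_sum]

section QBinom

variable {R : Type*} [CommSemiring R] (q : R)

/-- `qBinom q i j` is the Gaussian binomial `[i + j choose i]_q`, indexed by the two exponents of
the monomial `a ^ i * b ^ j` it multiplies, so that no truncated subtraction occurs. -/
def qBinom : ℕ → ℕ → R
  | 0, _ => 1
  | _ + 1, 0 => 1
  | i + 1, j + 1 => q ^ (j + 1) * qBinom i (j + 1) + qBinom (i + 1) j

@[simp]
theorem qBinom_zero_left (j : ℕ) : qBinom q 0 j = 1 :=
  qBinom.eq_1 q j

@[simp]
theorem qBinom_zero_right (i : ℕ) : qBinom q i 0 = 1 := by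
  cases i <;> simp [qBinom]

theorem qBinom_succ_succ (i j : ℕ) :
    qBinom q (i + 1) (j + 1) = q ^ (j + 1) * qBinom q i (j + 1) + qBinom q (i + 1) j :=
  qBinom.eq_3 q i j

def qFactorial (n : ℕ) : R :=
  ∏ k ∈ range n, ∑ i ∈ range (k + 1), q ^ i

theorem qFactorial_succ (n : ℕ) :
    qFactorial q (n + 1) = qFactorial q n * ∑ i ∈ range (n + 1), q ^ i :=
  prod_range_succ _ n

theorem qFactorial_mul_qFactorial_mul_qBinom (i j : ℕ) :
    qFactorial q i * qFactorial q j * qBinom q i j = qFactorial q (i + j) := by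
  induction i, j using qBinom.induct with
  | case1 j => simp [qFactorial]
  | case2 i => simp [qFactorial]
  | case3 i j ih₁ ih₂ =>
    rw [show i + (j + 1) = i + j + 1 by omega] at ih₁
    rw [show i + 1 + j = i + j + 1 by omega] at ih₂
    calc qFactorial q (i + 1) * qFactorial q (j + 1) * qBinom q (i + 1) (j + 1)
        = (∑ k ∈ range (i + 1), q ^ k) * q ^ (j + 1) *
              (qFactorial q i * qFactorial q (j + 1) * qBinom q i (j + 1)) +
            (∑ k ∈ range (j + 1), q ^ k) *
              (qFactorial q (i + 1) * qFactorial q j * qBinom q (i + 1) j) := by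
          rw [qBinom_succ_succ, qFactorial_succ q i, qFactorial_succ q j]
          ring
      _ = qFactorial q (i + j + 1) *
            (∑ k ∈ range (j + 1), q ^ k + q ^ (j + 1) * ∑ k ∈ range (i + 1), q ^ k) := by
          rw [ih₁, ih₂]
          ring
      _ = qFactorial q (i + 1 + (j + 1)) := by
          rw [show i + 1 + (j + 1) = i + j + 1 + 1 by omega, qFactorial_succ q (i + j + 1),
            ← geom_sum_add, show j + 1 + (i + 1) = i + j + 1 + 1 by omega]

end QBinom

namespace IsPrimitiveRoot

variable {R : Type*} [CommRing R] [IsDomain R] {q : R}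

theorem qFactorial_ne_zero {n m : ℕ} (hq : IsPrimitiveRoot q n) (hm : m < n) :
    qFactorial q m ≠ 0 := by
  refine prod_ne_zero_iff.mpr fun k hk hzero => ?_
  have hpow : q ^ (k + 1) - 1 = 0 := by rw [← geom_sum_mul, hzero, zero_mul]
  exact hq.pow_ne_one_of_pos_of_lt k.succ_ne_zero (by rw [mem_range] at hk; omega) (sub_eq_zero.mp hpow)

theorem qBinom_eq_zero {i j : ℕ} (hq : IsPrimitiveRoot q (i + j)) (hi : 0 < i) (hj : 0 < j) :
    qBinom q i j = 0 := by
  obtain ⟨n, hn⟩ : ∃ n, i + j = n + 1 := ⟨i + j - 1, by omega⟩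
  have hfact : qFactorial q i * qFactorial q j * qBinom q i j = 0 := by
    rw [qFactorial_mul_qFactorial_mul_qBinom, hn, qFactorial_succ, ← hn,
      hq.geom_sum_eq_zero (by omega), mul_zero]
  exact (mul_eq_zero.mp hfact).resolve_left <|
    mul_ne_zero (hq.qFactorial_ne_zero (by omega)) (hq.qFactorial_ne_zero (by omega))

end IsPrimitiveRoot

section Expansion

variable {R M : Type*} [CommSemiring R] [AddCommMonoid M] [Module R M] (q : R)

theorem sum_antidiagonal_qBinom_succ_smul (f : ℕ → ℕ → M) (n : ℕ) :
    ∑ p ∈ antidiagonal (n + 1), qBinom q p.1 p.2 • f p.1 p.2 =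
      ∑ p ∈ antidiagonal n, (q ^ p.2 * qBinom q p.1 p.2) • f (p.1 + 1) p.2 +
        ∑ p ∈ antidiagonal n, qBinom q p.1 p.2 • f p.1 (p.2 + 1) := by
  cases n with
  | zero => simp [Nat.sum_antidiagonal_succ', add_comm]
  | succ m =>
    rw [Nat.sum_antidiagonal_succ, Nat.sum_antidiagonal_succ', Nat.sum_antidiagonal_succ',
      Nat.sum_antidiagonal_succ]
    simp only [qBinom_succ_succ, add_smul, sum_add_distrib, qBinom_zero_left, qBinom_zero_right,
      pow_zero, one_mul]
    abel

end Expansion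

section QCommute

variable {R A : Type*} [CommSemiring R] [Semiring A] [Algebra R A] {q : R} {a b : A}

theorem pow_mul_eq_smul_mul_pow (h : b * a = q • (a * b)) (j : ℕ) :
    b ^ j * a = q ^ j • (a * b ^ j) := by
  induction j with
  | zero => simp
  | succ j ih =>
    rw [pow_succ', mul_assoc, ih, mul_smul_comm, ← mul_assoc, h, smul_mul_assoc, smul_smul,
      mul_assoc, ← pow_succ', ← pow_succ]

theorem add_pow_eq_sum_antidiagonal_qBinom (h : b * a = q • (a * b)) (n : ℕ) :
    (a + b) ^ n = ∑ p ∈ antidiagonal n, qBinom q p.1 p.2 • (a ^ p.1 * b ^ p.2) := by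
  induction n with
  | zero => simp
  | succ n ih =>
    rw [sum_antidiagonal_qBinom_succ_smul q (fun i j => a ^ i * b ^ j), pow_succ, ih, sum_mul,
      ← sum_add_distrib]
    refine sum_congr rfl fun p _ => ?_
    rw [smul_mul_assoc, mul_add, smul_add, mul_assoc, pow_mul_eq_smul_mul_pow h, mul_smul_comm,
      smul_smul, ← mul_assoc, ← pow_succ, mul_assoc, ← pow_succ, mul_comm (qBinom q p.1 p.2)]

end QCommute

theorem IsPrimitiveRoot.add_pow_eq_of_mul_eq_smul {R A : Type*} [CommRing R] [IsDomain R]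
    [Semiring A] [Algebra R A] {q : R} {n : ℕ} (hq : IsPrimitiveRoot q n) (hn : 0 < n) {a b : A}
    (h : b * a = q • (a * b)) : (a + b) ^ n = a ^ n + b ^ n := by
  rw [add_pow_eq_sum_antidiagonal_qBinom h, sum_eq_add (n, 0) (0, n) (by simp; omega)]
  · simp
  · rintro ⟨i, j⟩ hij ⟨hi, hj⟩
    rw [HasAntidiagonal.mem_antidiagonal] at hij
    subst hij
    rw [hq.qBinom_eq_zero (by grind) (by grind), zero_smul]
  · simp
  · simp

/-- The q-analogue of the freshman's dream: if `b a = q' a b` in a unital complex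
algebra, with `q'` a primitive `n'`-th root of unity, `n' > 1`, then
`(a + b)^{n'} = a^{n'} + b^{n'}`. -/
theorem add_pow_of_q_commute {A : Type*} [Ring A] [Algebra ℂ A]
    (n' : ℕ) (hn' : 1 < n') (q' : ℂ) (hq : q' ^ n' = 1)
    (hprim : ∀ k, 0 < k → k < n' → q' ^ k ≠ 1)
    (a b : A) (hcomm : b * a = q' • (a * b)) :
    (a + b) ^ n' = a ^ n' + b ^ n' :=
  (IsPrimitiveRoot.mk_of_lt q' (by omega) hq hprim).add_pow_eq_of_mul_eq_smul (by omega) hcomm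
end

section
/- Let n be a natural number and let μ: ℂ[X] → ℂ be a unital linear functional with μ(X^k) = 0 unless n divides k. Then for any parameter q ∈ ℂ, the q-cumulants α_k^{(q)} of μ, defined recursively by μ(X^k) = Σ_{P ∈ 𝒫[k]} q^{c_0(P)} ∏_{B block of P} α_{|B|}^{(q)} for k ≥ 1, also satisfy α_k^{(q)} = 0 unless n divides k. -/
/-!
Induct on `k`. In the moment–cumulant recursion for `μ(Xᵏ)`, the one-block partition contributes
exactly `α_k` (it has no crossings), while every other partition of `[k]` has a block whose size
is smaller than `k` and, because the block sizes add up to `k`, not divisible by `n`; by induction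
the corresponding cumulant vanishes, and with it the whole product. So `α_k = μ(Xᵏ) = 0`.
-/

open Finset

noncomputable instance {α : Type*} [Fintype α] [DecidableEq α] (s : Finset α) :
    Fintype (Finpartition s) :=
  Fintype.ofInjective Finpartition.parts fun a b h => by cases a; cases b; simpa using h

namespace Finpartition

variable {ι : Type*} [DecidableEq ι] {s : Finset ι}

theorem eq_indiscrete_of_mem_parts (hs : s ≠ ⊥) {P : Finpartition s} (h : s ∈ P.parts) :
    P = indiscrete hs := by
  ext C
  rw [indiscrete_parts, mem_singleton]
  refine ⟨fun hC => ?_, fun hC => hC ▸ h⟩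
  obtain ⟨x, hx⟩ := P.nonempty_of_mem_parts hC
  exact P.eq_of_mem_parts hC h hx (P.le hC hx)

theorem card_lt_of_ne_indiscrete (hs : s ≠ ⊥) {P : Finpartition s} (hP : P ≠ indiscrete hs)
    {B : Finset ι} (hB : B ∈ P.parts) : #B < #s := by
  refine (card_le_card (P.le hB)).lt_of_ne fun hcard => hP ?_
  exact eq_indiscrete_of_mem_parts hs (eq_of_subset_of_card_le (P.le hB) hcard.ge ▸ hB)

theorem exists_not_dvd_card_parts {n : ℕ} (P : Finpartition s) (h : ¬ n ∣ #s) :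
    ∃ B ∈ P.parts, ¬ n ∣ #B := by
  by_contra! hdvd
  exact h (P.sum_card_parts ▸ dvd_sum hdvd)

theorem prod_card_parts_eq_zero {M : Type*} [CommMonoidWithZero M] {n : ℕ} {f : ℕ → M}
    (hf : ∀ j < #s, 1 ≤ j → ¬ n ∣ j → f j = 0) (hs : s ≠ ⊥) (hns : ¬ n ∣ #s)
    {P : Finpartition s} (hP : P ≠ indiscrete hs) : ∏ B ∈ P.parts, f #B = 0 := by
  obtain ⟨B, hB, hnB⟩ := P.exists_not_dvd_card_parts hns
  exact prod_eq_zero hB <| hf _ (card_lt_of_ne_indiscrete hs hP hB)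
    (P.nonempty_of_mem_parts hB).card_pos hnB

end Finpartition

theorem c0_indiscrete {N : ℕ} (h : (univ : Finset (Fin N)) ≠ ⊥) :
    c0 (Finpartition.indiscrete h) = 0 := by
  rw [c0, Set.ncard_eq_zero, Set.eq_empty_iff_forall_notMem]
  rintro t ⟨-, -, -, A, hA, B, hB, hAB, -⟩
  rw [Finpartition.indiscrete_parts, mem_singleton] at hA hB
  exact hAB (hA.trans hB.symm)

theorem q_cumulants_vanish_general (n : ℕ) (μ : ℕ → ℂ)
    (hμ : ∀ k, 1 ≤ k → ¬ n ∣ k → μ k = 0)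
    (q : ℂ) (α : ℕ → ℂ)
    (hrec : ∀ k, 1 ≤ k → μ k =
      ∑ P : Finpartition (univ : Finset (Fin k)),
        q ^ c0 P * ∏ B ∈ P.parts, α B.card) :
    ∀ k, 1 ≤ k → ¬ n ∣ k → α k = 0 := by
  intro k
  induction k using Nat.strong_induction_on with
  | _ k ih =>
  intro hk hnk
  have hne : (univ : Finset (Fin k)) ≠ ⊥ := (univ_nonempty_iff.2 ⟨⟨0, hk⟩⟩).ne_empty
  have hcard : #(univ : Finset (Fin k)) = k := card_fin k
  have hothers : ∀ P : Finpartition (univ : Finset (Fin k)), P ≠ .indiscrete hne →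
      q ^ c0 P * ∏ B ∈ P.parts, α #B = 0 := fun P hP => by
    rw [Finpartition.prod_card_parts_eq_zero (hcard ▸ ih) hne (hcard.symm ▸ hnk) hP, mul_zero]
  have hμk := hrec k hk
  rw [sum_eq_single_of_mem _ (mem_univ _) fun P _ hP => hothers P hP, c0_indiscrete,
    Finpartition.indiscrete_parts, prod_singleton, hcard, hμ k hk hnk] at hμk
  simpa using hμk.symm

/-- If the moments `μ(Xᵏ)` vanish unless `n ∣ k`, then the `q`-cumulants `α_k`, defined by
the recursion `μ(Xᵏ) = Σ_{P ∈ 𝒫[k]} q^{c₀(P)} Π_{B ∈ P} α_{|B|}`, also vanish unless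
`n ∣ k`. -/
theorem q_cumulants_vanish (n : ℕ) (μ : ℕ → ℂ) (hμ0 : μ 0 = 1)
    (hμ : ∀ k, 1 ≤ k → ¬ n ∣ k → μ k = 0)
    (q : ℂ) (α : ℕ → ℂ)
    (hrec : ∀ k, 1 ≤ k → μ k =
      ∑ P : Finpartition (univ : Finset (Fin k)),
        q ^ c0 P * ∏ B ∈ P.parts, α B.card) :
    ∀ k, 1 ≤ k → ¬ n ∣ k → α k = 0 :=
  q_cumulants_vanish_general n μ hμ q α hrec
end
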